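/- Let A be a |U|×|X| matrix with nonnegative entries, columns summing to 1, and no zero rows; let a_min be as in the context. Let a_min ≤ a ≤ 1, 2 ≤ n ≤ |U|, 0 < ε_s < a_min, and ε, ε_{n-1} > 0. Define ε''_n = ε_{n-1}/a + (1/(a_min·a·ε_s))[ε + (n-1)(ε+ε_{n-1})/a], and suppose ε''_n < a_min. Suppose the left null space of A contains an L1-normalized (a, ε_{n-1})-diagonal polarized (n-1)×|U| matrix Υ and an L1-normalized vector υ that is (a, ε)-polarized at n and NOT ε_s-dependent on the rows of Υ. Then for every ε'' with ε''_n ≤ ε'' < a_min, the left null space of A contains an L1-normalized n×|U| matrix that is (a_min, ε'')-diagonal polarized. -/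
import Mathlib


open Finset

/-- Minimum row sum of the matrix `A`. -/
noncomputable def Amin {U X : ℕ} [NeZero U] (A : Matrix (Fin U) (Fin X) ℝ) : ℝ :=
  Finset.univ.inf' Finset.univ_nonempty (fun i => ∑ j, A i j)

/-- The constant `a_min = A_min / (|U|(|X| + A_min))`. -/
noncomputable def amin {U X : ℕ} [NeZero U] (A : Matrix (Fin U) (Fin X) ℝ) : ℝ :=
  Amin A / (U * (X + Amin A))

lemma Amin_pos {U X : ℕ} [NeZero U] (A : Matrix (Fin U) (Fin X) ℝ)
    (hA0 : ∀ i j, 0 ≤ A i j) (hrow : ∀ i, ∃ j, A i j ≠ 0) : 0 < Amin A := by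
  rw [Amin, Finset.lt_inf'_iff]
  intro i _
  obtain ⟨j, hj⟩ := hrow i
  have : 0 < A i j := lt_of_le_of_ne (hA0 i j) (Ne.symm hj)
  exact Finset.sum_pos' (fun k _ => hA0 i k) ⟨j, Finset.mem_univ j, this⟩

lemma Amin_le {U X : ℕ} [NeZero U] (A : Matrix (Fin U) (Fin X) ℝ) (i : Fin U) :
    Amin A ≤ ∑ j, A i j :=
  Finset.inf'_le _ (Finset.mem_univ i)

lemma amin_pos {U X : ℕ} [NeZero U] (A : Matrix (Fin U) (Fin X) ℝ)
    (hA0 : ∀ i j, 0 ≤ A i j) (hrow : ∀ i, ∃ j, A i j ≠ 0) : 0 < amin A := by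
  have h1 := Amin_pos A hA0 hrow
  have hU : (0:ℝ) < U := by exact_mod_cast Nat.pos_of_ne_zero (NeZero.ne U)
  have hX : (0:ℝ) ≤ X := Nat.cast_nonneg X
  exact div_pos h1 (mul_pos hU (by linarith))

lemma amin_le_one {U X : ℕ} [NeZero U] (A : Matrix (Fin U) (Fin X) ℝ)
    (hA0 : ∀ i j, 0 ≤ A i j) (hrow : ∀ i, ∃ j, A i j ≠ 0) : amin A ≤ 1 := by
  have h1 := Amin_pos A hA0 hrow
  have hU : (1:ℝ) ≤ U := by
    have := Nat.one_le_iff_ne_zero.2 (NeZero.ne U); exact_mod_cast this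
  have hX : (0:ℝ) ≤ X := Nat.cast_nonneg X
  rw [amin, div_le_one (by nlinarith)]
  nlinarith

/-- Key lemma: any L1-normalized vector in the left null space has an entry ≥ amin. -/
lemma exists_ge_amin {U X : ℕ} [NeZero U] (A : Matrix (Fin U) (Fin X) ℝ)
    (hA0 : ∀ i j, 0 ≤ A i j) (hcol : ∀ j, ∑ i, A i j = 1) (hrow : ∀ i, ∃ j, A i j ≠ 0)
    (v : Fin U → ℝ) (hnorm : ∑ j, |v j| = 1) (hnull : ∀ j, ∑ k, v k * A k j = 0) :
    ∃ k, amin A ≤ v k := by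
  set r : Fin U → ℝ := fun i => ∑ j, A i j with hr
  have hrsum : ∑ i, v i * r i = 0 := by
    have : ∑ i, v i * r i = ∑ j, ∑ i, v i * A i j := by
      rw [Finset.sum_comm]
      exact Finset.sum_congr rfl fun i _ => Finset.mul_sum _ _ _
    rw [this]
    simp [hnull]
  have hA1 : ∀ i j, A i j ≤ 1 := by
    intro i j
    calc A i j ≤ ∑ k, A k j := Finset.single_le_sum (fun k _ => hA0 k j) (Finset.mem_univ i)
    _ = 1 := hcol j
  have hrX : ∀ i, r i ≤ X := by
    intro i
    calc r i ≤ ∑ _j : Fin X, (1:ℝ) := Finset.sum_le_sum fun j _ => hA1 i j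
    _ = X := by simp
  have hrA : ∀ i, Amin A ≤ r i := fun i => Amin_le A i
  have hA : 0 < Amin A := Amin_pos A hA0 hrow
  set p : ℝ := ∑ i, max (v i) 0 with hp
  set q : ℝ := ∑ i, max (-v i) 0 with hq
  have hpq : p + q = 1 := by
    rw [hp, hq, ← Finset.sum_add_distrib, ← hnorm]
    refine Finset.sum_congr rfl fun i _ => ?_
    rcases le_total (v i) 0 with h | h
    · rw [max_eq_right h, max_eq_left (by linarith), abs_of_nonpos h]; ring
    · rw [max_eq_left h, max_eq_right (by linarith), abs_of_nonneg h]; ring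
  have hsplit : ∑ i, max (v i) 0 * r i = ∑ i, max (-v i) 0 * r i := by
    have e : ∀ i : Fin U, max (v i) 0 * r i - max (-v i) 0 * r i = v i * r i := by
      intro i
      rcases le_total (v i) 0 with h | h
      · rw [max_eq_right h, max_eq_left (by linarith)]; ring
      · rw [max_eq_left h, max_eq_right (by linarith)]; ring
    have : ∑ i, (max (v i) 0 * r i - max (-v i) 0 * r i) = 0 := by
      rw [Finset.sum_congr rfl fun i _ => e i]; exact hrsum
    rw [Finset.sum_sub_distrib] at this
    linarith
  have h1 : Amin A * q ≤ ∑ i, max (-v i) 0 * r i := by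
    rw [hq, Finset.mul_sum]
    refine Finset.sum_le_sum fun i _ => ?_
    rw [mul_comm]
    exact mul_le_mul_of_nonneg_left (hrA i) (le_max_right _ _)
  have h2 : ∑ i, max (v i) 0 * r i ≤ p * X := by
    rw [hp, Finset.sum_mul]
    refine Finset.sum_le_sum fun i _ => ?_
    exact mul_le_mul_of_nonneg_left (hrX i) (le_max_right _ _)
  have hkey : Amin A ≤ p * (X + Amin A) := by nlinarith
  obtain ⟨k, -, hk⟩ := Finset.exists_max_image Finset.univ v Finset.univ_nonempty
  have hpk : p ≤ U * max (v k) 0 := by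
    rw [hp]
    calc ∑ i, max (v i) 0 ≤ ∑ _i : Fin U, max (v k) 0 :=
      Finset.sum_le_sum fun i _ => max_le_max (hk i (Finset.mem_univ i)) le_rfl
    _ = U * max (v k) 0 := by simp [mul_comm]
  have hvk : 0 < v k := by
    by_contra h
    push_neg at h
    rw [max_eq_right h] at hpk
    have hXA : 0 < (X:ℝ) + Amin A := by positivity
    nlinarith
  rw [max_eq_left hvk.le] at hpk
  refine ⟨k, ?_⟩
  have hU : (0:ℝ) < U := by
    have := Nat.pos_of_ne_zero (NeZero.ne U); exact_mod_cast this
  have hXA : 0 < (X:ℝ) + Amin A := by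
    have : (0:ℝ) ≤ X := Nat.cast_nonneg X
    linarith
  rw [amin, div_le_iff₀ (by nlinarith)]
  nlinarith

/-- If all entries of an L1-normalized null vector except possibly at `d` are
below `amin A`, then the entry at `d` is at least `amin A`. -/
lemma forced_coord {U X : ℕ} [NeZero U] (A : Matrix (Fin U) (Fin X) ℝ)
    (hA0 : ∀ i j, 0 ≤ A i j) (hcol : ∀ j, ∑ i, A i j = 1) (hrow : ∀ i, ∃ j, A i j ≠ 0)
    (v : Fin U → ℝ) (hnorm : ∑ j, |v j| = 1) (hnull : ∀ j, ∑ k, v k * A k j = 0)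
    (d : Fin U) (hother : ∀ k, k ≠ d → v k < amin A) : amin A ≤ v d := by
  obtain ⟨k, hk⟩ := exists_ge_amin A hA0 hcol hrow v hnorm hnull
  by_cases h : k = d
  · exact h ▸ hk
  · exact absurd hk (not_le.2 (hother k h))

set_option maxHeartbeats 2000000 in
theorem stmt_4 {U X : ℕ} [NeZero U] [NeZero X]
    (A : Matrix (Fin U) (Fin X) ℝ)
    (hA0 : ∀ i j, 0 ≤ A i j)
    (hcol : ∀ j, ∑ i, A i j = 1)
    (hrow : ∀ i, ∃ j, A i j ≠ 0)
    (n : ℕ) (hn2 : 2 ≤ n) (hnU : n ≤ U)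
    (a : ℝ) (ha1 : amin A ≤ a) (ha2 : a ≤ 1)
    (εs ε εn1 : ℝ) (hεs0 : 0 < εs) (hεs : εs < amin A) (hε0 : 0 < ε) (hεn1 : 0 < εn1)
    (e'' : ℝ)
    (he''def : e'' = εn1 / a +
      (1 / (amin A * a * εs)) * (ε + ((n : ℝ) - 1) * (ε + εn1) / a))
    (he'' : e'' < amin A)
    -- the `(a, ε_{n-1})`-diagonal polarized matrix with L1-normalized rows in
    -- the left null space of `A`
    (Υ : Fin (n - 1) → Fin U → ℝ)
    (hΥnorm : ∀ i, ∑ j, |Υ i j| = 1)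
    (hΥnull : ∀ i j, ∑ k, Υ i k * A k j = 0)
    (hΥdiag : ∀ i : Fin (n - 1), a ≤ Υ i ⟨(i : ℕ), by have := i.isLt; omega⟩)
    (hΥzero : ∀ (i : Fin (n - 1)) (j : Fin U), (j : ℕ) < n - 1 → (j : ℕ) ≠ (i : ℕ) → Υ i j = 0)
    (hΥoff : ∀ (i : Fin (n - 1)) (j : Fin U), n - 1 ≤ (j : ℕ) → Υ i j ≤ εn1)
    -- the L1-normalized `(a, ε)`-polarized (at `n`) vector in the left null
    -- space of `A`, NOT `ε_s`-dependent on the rows of `Υ`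
    (υ : Fin U → ℝ)
    (hυnorm : ∑ j, |υ j| = 1)
    (hυnull : ∀ j, ∑ k, υ k * A k j = 0)
    (hυpol : a ≤ υ ⟨n - 1, by omega⟩)
    (hυoff : ∀ j : Fin U, (j : ℕ) ≠ n - 1 → υ j ≤ ε)
    (hnodep : ¬ ∃ c : Fin (n - 1) → ℝ, ∑ j, |υ j - ∑ i, c i * Υ i j| ≤ εs) :
    ∀ ε'' : ℝ, e'' ≤ ε'' → ε'' < amin A →
      ∃ Ξ : Fin n → Fin U → ℝ,
        (∀ i, ∑ j, |Ξ i j| = 1) ∧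
        (∀ i j, ∑ k, Ξ i k * A k j = 0) ∧
        (∀ i : Fin n, amin A ≤ Ξ i ⟨(i : ℕ), by have := i.isLt; omega⟩) ∧
        (∀ (i : Fin n) (j : Fin U), (j : ℕ) < n → (j : ℕ) ≠ (i : ℕ) → Ξ i j = 0) ∧
        (∀ (i : Fin n) (j : Fin U), n ≤ (j : ℕ) → Ξ i j ≤ ε'') := by
  intro ε'' h1ε'' h2ε''
  have hα0 : 0 < amin A := amin_pos A hA0 hrow
  have hα1 : amin A ≤ 1 := amin_le_one A hA0 hrow
  have ha0 : 0 < a := lt_of_lt_of_le hα0 ha1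
  obtain ⟨S, hSdef⟩ : ∃ S : ℝ, S = ε + ((n : ℝ) - 1) * (ε + εn1) / a := ⟨_, rfl⟩
  rw [← hSdef] at he''def
  have hn1R : (1:ℝ) ≤ (n:ℝ) - 1 := by
    have : (2:ℝ) ≤ (n:ℝ) := by exact_mod_cast hn2
    linarith
  have hS0 : 0 < S := by
    have h1 : 0 < (ε + εn1) / a := div_pos (by linarith) ha0
    have h2 : 0 < ((n:ℝ) - 1) * ((ε + εn1) / a) := mul_pos (by linarith) h1
    have h6 : ((n:ℝ) - 1) * ((ε + εn1) / a) = ((n:ℝ) - 1) * (ε + εn1) / a := by ring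
    rw [hSdef]
    linarith
  -- the embeddings
  set E : Fin (n - 1) → Fin U := fun i => Fin.castLE (by omega) i with hE
  set d : Fin U := ⟨n - 1, by omega⟩ with hd
  have hEval : ∀ i : Fin (n - 1), ((E i : ℕ)) = (i : ℕ) := fun i => rfl
  have hdval : ((d : ℕ)) = n - 1 := rfl
  -- entry bounds from L1-normalization
  have habsυ : ∀ j, |υ j| ≤ 1 := fun j => by
    rw [← hυnorm]
    exact Finset.single_le_sum (f := fun k => |υ k|) (fun k _ => abs_nonneg _) (Finset.mem_univ j)
  have habsΥ : ∀ i j, |Υ i j| ≤ 1 := fun i j => by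
    rw [← hΥnorm i]
    exact Finset.single_le_sum (f := fun k => |Υ i k|) (fun k _ => abs_nonneg _) (Finset.mem_univ j)
  have hΥd : ∀ i, a ≤ Υ i (E i) := fun i => hΥdiag i
  have hΥd0 : ∀ i, 0 < Υ i (E i) := fun i => lt_of_lt_of_le ha0 (hΥd i)
  -- the coefficients c
  set c : Fin (n - 1) → ℝ := fun i => υ (E i) / Υ i (E i) with hc
  have hc_up : ∀ i, a * c i ≤ ε := by
    intro i
    rw [hc]
    dsimp only
    rw [mul_div_assoc' a _ _, div_le_iff₀ (hΥd0 i)]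
    have h1 : υ (E i) ≤ ε := hυoff (E i) (by rw [hEval]; have := i.isLt; omega)
    have h2 := mul_le_mul_of_nonneg_left h1 ha0.le
    have h3 := mul_le_mul_of_nonneg_left (hΥd i) hε0.le
    linarith
  have hc_lo : ∀ i, -1 ≤ a * c i := by
    intro i
    rw [hc]
    dsimp only
    rw [mul_div_assoc' a _ _, le_div_iff₀ (hΥd0 i)]
    have h1 : -1 ≤ υ (E i) := (abs_le.1 (habsυ (E i))).1
    have h2 := mul_le_mul_of_nonneg_left h1 ha0.le
    have h3 := hΥd i
    linarith
  -- the vector w = υ - ∑ c i • Υ i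
  set w : Fin U → ℝ := fun j => υ j - ∑ i, c i * Υ i j with hw
  have hw_null : ∀ j, ∑ k, w k * A k j = 0 := by
    intro j
    have step : ∀ k, w k * A k j = υ k * A k j - ∑ i, c i * (Υ i k * A k j) := by
      intro k
      rw [hw]
      dsimp only
      rw [sub_mul, Finset.sum_mul]
      congr 1
      exact Finset.sum_congr rfl fun i _ => by ring
    rw [Finset.sum_congr rfl fun k _ => step k, Finset.sum_sub_distrib, hυnull j,
      Finset.sum_comm]
    simp [← Finset.mul_sum, hΥnull]
  have hw_zero : ∀ j : Fin U, (j : ℕ) < n - 1 → w j = 0 := by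
    intro j hj
    have hjE : E ⟨(j : ℕ), hj⟩ = j := Fin.ext rfl
    rw [hw]
    dsimp only
    rw [Finset.sum_eq_single (⟨(j : ℕ), hj⟩ : Fin (n - 1))]
    · rw [hc]
      dsimp only
      rw [hjE, div_mul_cancel₀]
      · ring
      · simpa only [hjE] using (hΥd0 ⟨(j : ℕ), hj⟩).ne'
    · intro b _ hb
      have : Υ b j = 0 := by
        apply hΥzero b j hj
        intro hh
        exact hb (Fin.ext hh.symm)
      rw [this, mul_zero]
    · intro h; exact absurd (Finset.mem_univ _) h
  -- its L1 norm is > εs by non-dependence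
  set N : ℝ := ∑ j, |w j| with hN
  have hNεs : εs < N := by
    push_neg at hnodep
    have := hnodep c
    rw [hN, hw]
    simpa using this
  have hN0 : 0 < N := lt_trans hεs0 hNεs
  -- the normalized vector g
  set g : Fin U → ℝ := fun j => w j / N with hg
  have hgnorm : ∑ j, |g j| = 1 := by
    rw [hg]
    simp only [abs_div, abs_of_pos hN0]
    rw [← Finset.sum_div, ← hN, div_self hN0.ne']
  have hgnull : ∀ j, ∑ k, g k * A k j = 0 := by
    intro j
    rw [hg]
    simp only [div_mul_eq_mul_div]
    rw [← Finset.sum_div, hw_null j, zero_div]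
  have hgzero : ∀ j : Fin U, (j : ℕ) < n - 1 → g j = 0 := by
    intro j hj
    rw [hg]
    dsimp only
    rw [hw_zero j hj, zero_div]
  have habsg : ∀ j, |g j| ≤ 1 := fun j => by
    rw [← hgnorm]
    exact Finset.single_le_sum (f := fun k => |g k|) (fun k _ => abs_nonneg _) (Finset.mem_univ j)
  -- tail bound on w
  have htermbound : ∀ (i : Fin (n - 1)) (Y : ℝ), -1 ≤ Y → Y ≤ εn1 →
      -(c i * Y) ≤ (ε + εn1) / a := by
    intro i Y h1 h2
    rw [le_div_iff₀ ha0]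
    rcases le_or_gt 0 (c i) with h | h
    · have h5 := mul_le_mul_of_nonneg_left (show -Y ≤ (1:ℝ) by linarith)
        (mul_nonneg ha0.le h)
      have h6 := hc_up i
      nlinarith
    · have hac : a * c i ≤ 0 := (mul_nonpos_iff).2 (Or.inl ⟨ha0.le, h.le⟩)
      have h5 : (a * c i) * (-Y) ≤ (a * c i) * (-εn1) :=
        mul_le_mul_of_nonpos_left (by linarith) hac
      have h6 : (-(a * c i)) * εn1 ≤ 1 * εn1 :=
        mul_le_mul_of_nonneg_right (by linarith [hc_lo i]) hεn1.le
      nlinarith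
  have hwtail : ∀ j : Fin U, n ≤ (j : ℕ) → w j ≤ S := by
    intro j hj
    have h1 : υ j ≤ ε := hυoff j (by omega)
    have h2 : ∀ i, -(c i * Υ i j) ≤ (ε + εn1) / a := fun i =>
      htermbound i _ ((abs_le.1 (habsΥ i j)).1) (hΥoff i j (by omega))
    have h3 : w j = υ j + ∑ i, -(c i * Υ i j) := by
      rw [hw]; dsimp only; rw [Finset.sum_neg_distrib]; ring
    rw [h3]
    have h4 : ∑ i : Fin (n - 1), -(c i * Υ i j) ≤ ∑ _i : Fin (n - 1), (ε + εn1) / a :=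
      Finset.sum_le_sum fun i _ => h2 i
    have h5 : ∑ _i : Fin (n - 1), (ε + εn1) / a = ((n : ℝ) - 1) * ((ε + εn1) / a) := by
      rw [Finset.sum_const, Finset.card_univ, Fintype.card_fin, nsmul_eq_mul]
      congr 1
      rw [Nat.cast_sub (by omega), Nat.cast_one]
    rw [h5] at h4
    have h6 : ((n : ℝ) - 1) * ((ε + εn1) / a) = ((n : ℝ) - 1) * (ε + εn1) / a := by ring
    linarith [h4, h1, hSdef.le, hSdef.ge]
  have hgtail : ∀ j : Fin U, n ≤ (j : ℕ) → g j ≤ S / εs := by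
    intro j hj
    rcases le_or_gt (w j) 0 with h | h
    · have : g j ≤ 0 := by
        rw [hg]; exact div_nonpos_of_nonpos_of_nonneg h hN0.le
      have : 0 ≤ S / εs := le_of_lt (div_pos hS0 hεs0)
      linarith
    · rw [hg]
      exact div_le_div₀ hS0.le (hwtail j hj) hεs0 hNεs.le
  -- relate S/εs to e''
  have hSe1 : S / (amin A * a * εs) = e'' - εn1 / a := by
    rw [he''def]; ring
  have hSe2 : S / εs ≤ S / (amin A * a * εs) := by
    apply div_le_div₀ hS0.le le_rfl (by positivity)
    have h1 : amin A * a ≤ 1 := mul_le_one₀ hα1 ha0.le ha2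
    have h2 := mul_le_mul_of_nonneg_right h1 hεs0.le
    linarith
  have hεn1a : 0 < εn1 / a := div_pos hεn1 ha0
  have hSe3 : S / εs ≤ e'' := by
    rw [hSe1] at hSe2; linarith
  have hStail_lt : S / εs < amin A := lt_of_le_of_lt hSe3 he''
  have he''0 : 0 < e'' := by
    rw [he''def]
    have h1 : 0 < 1 / (amin A * a * εs) := by positivity
    have h2 := mul_pos h1 hS0
    have h3 := div_pos hεn1 ha0
    linarith
  -- the entry of g at d is ≥ amin
  have hgd : amin A ≤ g d := by
    apply forced_coord A hA0 hcol hrow g hgnorm hgnull d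
    intro k hk
    rcases lt_trichotomy ((k : ℕ)) (n - 1) with h | h | h
    · rw [hgzero k h]; exact hα0
    · exact absurd (Fin.ext h : k = d) hk
    · exact lt_of_le_of_lt (hgtail k (by omega)) hStail_lt
  have hgd0 : 0 < g d := lt_of_lt_of_le hα0 hgd
  -- coefficients for the first n-1 rows
  set dc : Fin (n - 1) → ℝ := fun i => Υ i d / g d with hdc
  have hΥid : ∀ i, Υ i d ≤ εn1 := fun i => hΥoff i d (by rw [hdval])
  have hd_up : ∀ i, amin A * dc i ≤ εn1 := by
    intro i
    rw [hdc]
    dsimp only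
    rw [mul_div_assoc' _ _ _, div_le_iff₀ hgd0]
    have h2 := mul_le_mul_of_nonneg_left (hΥid i) hα0.le
    have h3 := mul_le_mul_of_nonneg_left hgd hεn1.le
    linarith
  have hd_lo : ∀ i, -1 ≤ amin A * dc i := by
    intro i
    rw [hdc]
    dsimp only
    rw [mul_div_assoc' _ _ _, le_div_iff₀ hgd0]
    have h2 := mul_le_mul_of_nonneg_left ((abs_le.1 (habsΥ i d)).1) hα0.le
    have h3 := hgd
    linarith
  -- the unnormalized first rows
  set v : Fin (n - 1) → Fin U → ℝ := fun i j => Υ i j - dc i * g j with hv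
  have hv_null : ∀ i j, ∑ k, v i k * A k j = 0 := by
    intro i j
    have step : ∀ k, v i k * A k j = Υ i k * A k j - dc i * (g k * A k j) := by
      intro k; rw [hv]; dsimp only; ring
    rw [Finset.sum_congr rfl fun k _ => step k, Finset.sum_sub_distrib, hΥnull i j,
      ← Finset.mul_sum, hgnull j, mul_zero, sub_zero]
  have hv_zero1 : ∀ (i : Fin (n - 1)) (j : Fin U), (j : ℕ) < n - 1 → (j : ℕ) ≠ (i : ℕ) →
      v i j = 0 := by
    intro i j hj hji
    rw [hv]
    dsimp only
    rw [hΥzero i j hj hji, hgzero j hj, mul_zero, sub_zero]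
  have hv_d : ∀ i, v i d = 0 := by
    intro i
    rw [hv, hdc]
    dsimp only
    rw [div_mul_cancel₀ _ hgd0.ne', sub_self]
  have hv_diag : ∀ i, a ≤ v i (E i) := by
    intro i
    rw [hv]
    dsimp only
    rw [hgzero (E i) (by rw [hEval]; exact i.isLt), mul_zero, sub_zero]
    exact hΥd i
  -- L1 norms of the rows
  set Ni : Fin (n - 1) → ℝ := fun i => ∑ j, |v i j| with hNi
  have hNi_a : ∀ i, a ≤ Ni i := by
    intro i
    calc a ≤ v i (E i) := hv_diag i
    _ ≤ |v i (E i)| := le_abs_self _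
    _ ≤ Ni i := by
        rw [hNi]
        exact Finset.single_le_sum (f := fun k => |v i k|) (fun k _ => abs_nonneg _) (Finset.mem_univ (E i))
  have hNi0 : ∀ i, 0 < Ni i := fun i => lt_of_lt_of_le ha0 (hNi_a i)
  -- tail bound on v
  have hεn1S : εn1 ≤ S / εs := by
    have h1 : εn1 ≤ S := by
      have h2 : εn1 ≤ (ε + εn1) / a := by
        rw [le_div_iff₀ ha0]; nlinarith
      have h3 : (ε + εn1) / a ≤ ((n:ℝ) - 1) * ((ε + εn1) / a) :=
        le_mul_of_one_le_left (by positivity) hn1R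
      have h6 : ((n : ℝ) - 1) * ((ε + εn1) / a) = ((n : ℝ) - 1) * (ε + εn1) / a := by ring
      linarith [hSdef.le, hSdef.ge]
    have h2 : S ≤ S / εs := by
      rw [le_div_iff₀ hεs0]
      have h4 := mul_le_mul_of_nonneg_left (show εs ≤ 1 by linarith) hS0.le
      linarith
    linarith
  have hterm2 : ∀ (u z : ℝ), -1 ≤ u → u ≤ εn1 → -1 ≤ z → z ≤ S / εs → -(u * z) ≤ S / εs := by
    intro u z hu1 hu2 hz1 hz2
    rcases le_or_gt 0 u with h | h
    · have h5 := mul_le_mul_of_nonneg_left (show -z ≤ (1:ℝ) by linarith) h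
      nlinarith
    · have h5 : (-u) * z ≤ (-u) * (S / εs) :=
        mul_le_mul_of_nonneg_left hz2 (by linarith)
      have h6 : (-u) * (S / εs) ≤ 1 * (S / εs) :=
        mul_le_mul_of_nonneg_right (by linarith) (div_pos hS0 hεs0).le
      nlinarith
  have hvtail : ∀ (i : Fin (n - 1)) (j : Fin U), n ≤ (j : ℕ) →
      v i j ≤ εn1 + S / εs / amin A := by
    intro i j hj
    have hu := hterm2 (amin A * dc i) (g j) (hd_lo i) (hd_up i)
      ((abs_le.1 (habsg j)).1) (hgtail j hj)
    have h1 : -(dc i * g j) ≤ S / εs / amin A := by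
      rw [le_div_iff₀ hα0]
      nlinarith [hu]
    have h2 : Υ i j ≤ εn1 := hΥoff i j (by omega)
    rw [hv]
    dsimp only
    linarith
  have hTe : (εn1 + S / εs / amin A) / a = e'' := by
    rw [he''def]
    have h1 := ha0.ne'
    have h2 := hα0.ne'
    have h3 := hεs0.ne'
    field_simp
  have hrowtail : ∀ (i : Fin (n - 1)) (j : Fin U), n ≤ (j : ℕ) → v i j / Ni i ≤ e'' := by
    intro i j hj
    have h1 := hvtail i j hj
    rcases le_or_gt (v i j) 0 with hv0 | hv0
    · have h2 := div_nonpos_of_nonpos_of_nonneg hv0 (hNi0 i).le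
      linarith
    · have h2 : v i j / Ni i ≤ v i j / a :=
        div_le_div_of_nonneg_left hv0.le ha0 (hNi_a i)
      have h3 : v i j / a ≤ (εn1 + S / εs / amin A) / a := (div_le_div_iff_of_pos_right ha0).2 h1
      rw [hTe] at h3
      linarith
  have hΞnorm1 : ∀ i : Fin (n - 1), ∑ j, |v i j / Ni i| = 1 := by
    intro i
    simp only [abs_div, abs_of_pos (hNi0 i)]
    rw [← Finset.sum_div]
    exact div_self (hNi0 i).ne'
  have hΞnull1 : ∀ (i : Fin (n - 1)) (j : Fin X), ∑ k, (v i k / Ni i) * A k j = 0 := by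
    intro i j
    simp only [div_mul_eq_mul_div]
    rw [← Finset.sum_div, hv_null i j, zero_div]
  have hΞdiag1 : ∀ i : Fin (n - 1), amin A ≤ v i (E i) / Ni i := by
    intro i
    refine forced_coord A hA0 hcol hrow (fun j => v i j / Ni i) (hΞnorm1 i) (hΞnull1 i)
      (E i) ?_
    intro k hk
    show v i k / Ni i < amin A
    rcases lt_trichotomy ((k : ℕ)) (n - 1) with hkv | hkv | hkv
    · have hkne : (k : ℕ) ≠ (i : ℕ) := by
        intro hh
        exact hk (Fin.ext (by rw [hEval i]; exact hh))
      rw [hv_zero1 i k hkv hkne, zero_div]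
      exact hα0
    · rw [(Fin.ext hkv : k = d), hv_d, zero_div]
      exact hα0
    · exact lt_of_le_of_lt (hrowtail i k (by omega)) he''
  -- the matrix Ξ
  refine ⟨fun i => if h : (i : ℕ) < n - 1 then
      (fun j => v ⟨(i : ℕ), h⟩ j / Ni ⟨(i : ℕ), h⟩) else g, ?_, ?_, ?_, ?_, ?_⟩
  · -- L1-normalized
    intro i
    by_cases h : (i : ℕ) < n - 1
    · simp only [dif_pos h]
      exact hΞnorm1 ⟨(i : ℕ), h⟩
    · simp only [dif_neg h]
      exact hgnorm
  · -- null space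
    intro i j
    by_cases h : (i : ℕ) < n - 1
    · simp only [dif_pos h]
      exact hΞnull1 ⟨(i : ℕ), h⟩ j
    · simp only [dif_neg h]
      exact hgnull j
  · -- diagonal entries
    intro i
    by_cases h : (i : ℕ) < n - 1
    · simp only [dif_pos h]
      exact hΞdiag1 ⟨(i : ℕ), h⟩
    · simp only [dif_neg h]
      have : (⟨(i : ℕ), by have := i.isLt; omega⟩ : Fin U) = d := by
        apply Fin.ext
        have := i.isLt
        simp only [hdval]
        omega
      rw [this]
      exact hgd
  · -- zeros in the first n columns
    intro i j hj hji
    by_cases h : (i : ℕ) < n - 1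
    · simp only [dif_pos h]
      rcases lt_trichotomy ((j : ℕ)) (n - 1) with hjv | hjv | hjv
      · rw [hv_zero1 _ j hjv hji, zero_div]
      · rw [(Fin.ext hjv : j = d), hv_d, zero_div]
      · omega
    · simp only [dif_neg h]
      have hi : (i : ℕ) = n - 1 := by have := i.isLt; omega
      exact hgzero j (by omega)
  · -- tail bounds
    intro i j hj
    by_cases h : (i : ℕ) < n - 1
    · simp only [dif_pos h]
      exact le_trans (hrowtail _ j hj) h1ε''
    · simp only [dif_neg h]
      exact le_trans (le_trans (hgtail j hj) hSe3) h1ε''
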